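/- Let v = (v₁, v₂) be a polynomial vector field. Then sym curl v = 0 if and only if there exist a₁, a₂, b ∈ ℝ with v₁ = a₁ + b·X₁ and v₂ = a₂ + b·X₂, i.e. v belongs to the lowest-order Raviart–Thomas space RT = {a + b x : a ∈ ℝ², b ∈ ℝ}. -/

import Mathlib

open MvPolynomial Matrix

/-- Real polynomials in two variables. -/
abbrev P2 := MvPolynomial (Fin 2) ℝ

/-- The matrix `curl v` of a polynomial vector field, defined row-wise:
`(curl v)_{i1} = ∂₂ vᵢ`, `(curl v)_{i2} = -∂₁ vᵢ`. -/
noncomputable def pcurl (v : Fin 2 → P2) : Matrix (Fin 2) (Fin 2) P2 :=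
  Matrix.of fun i j =>
    if j = 0 then pderiv (1 : Fin 2) (v i) else -(pderiv (0 : Fin 2) (v i))

/-- `sym curl v := (curl v + (curl v)ᵀ)/2`. -/
noncomputable def psymCurl (v : Fin 2 → P2) : Matrix (Fin 2) (Fin 2) P2 :=
  (1 / 2 : ℝ) • (pcurl v + (pcurl v)ᵀ)

/-- `div div τ := Σ_{i,j} ∂ᵢ∂ⱼ τ_{ij}`. -/
noncomputable def pdivDiv (τ : Matrix (Fin 2) (Fin 2) P2) : P2 :=
  ∑ i : Fin 2, ∑ j : Fin 2, pderiv i (pderiv j (τ i j))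

/-- The matrix `x xᵀ q` with `(i,j)`-entry `Xᵢ · Xⱼ · q`. -/
noncomputable def xxT (q : P2) : Matrix (Fin 2) (Fin 2) P2 :=
  Matrix.of fun i j => X i * X j * q

/-- The polynomial vector `x^⊥ = (X₂, -X₁)`. -/
noncomputable def xPerp : Fin 2 → P2 := ![X 1, -X 0]

/-- `rot τ`, with components `(rot τ)ᵢ = ∂₁ τ_{i2} - ∂₂ τ_{i1}`. -/
noncomputable def prot (τ : Matrix (Fin 2) (Fin 2) P2) : Fin 2 → P2 :=
  fun i => pderiv (0 : Fin 2) (τ i 1) - pderiv (1 : Fin 2) (τ i 0)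

/-- The Hessian matrix `∇²q` with entries `∂ᵢ∂ⱼ q`. -/
noncomputable def phess (q : P2) : Matrix (Fin 2) (Fin 2) P2 :=
  Matrix.of fun i j => pderiv i (pderiv j q)

/-- `sym(x^⊥ ⊗ v)`, the symmetric matrix with `(i,j)`-entry
`((x^⊥)ᵢ vⱼ + vᵢ (x^⊥)ⱼ)/2`. -/
noncomputable def symTen (v : Fin 2 → P2) : Matrix (Fin 2) (Fin 2) P2 :=
  Matrix.of fun i j => (1 / 2 : ℝ) • (xPerp i * v j + v i * xPerp j)

/-- The gradient matrix `∇v` with entries `(∇v)_{ij} = ∂ⱼ vᵢ`. -/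
noncomputable def pgrad (v : Fin 2 → P2) : Matrix (Fin 2) (Fin 2) P2 :=
  Matrix.of fun i j => pderiv j (v i)

/-- The symmetric gradient `def v := (∇v + (∇v)ᵀ)/2`. -/
noncomputable def pdef (v : Fin 2 → P2) : Matrix (Fin 2) (Fin 2) P2 :=
  (1 / 2 : ℝ) • (pgrad v + (pgrad v)ᵀ)

/-- The matrix `x^⊥ (x^⊥)ᵀ q` with `(i,j)`-entry `(x^⊥)ᵢ (x^⊥)ⱼ q`. -/
noncomputable def xPerpxPerpT (q : P2) : Matrix (Fin 2) (Fin 2) P2 :=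
  Matrix.of fun i j => xPerp i * xPerp j * q

/-- `rot rot τ := ∂₁(rot τ)₂ − ∂₂(rot τ)₁`. -/
noncomputable def protRot (τ : Matrix (Fin 2) (Fin 2) P2) : P2 :=
  pderiv (0 : Fin 2) (prot τ 1) - pderiv (1 : Fin 2) (prot τ 0)


/-! `sym curl v = 0` says `∂₂v₁ = 0`, `∂₁v₂ = 0` and `∂₁v₁ = ∂₂v₂`. Since partial derivatives
commute, the common value `∂₁v₁ = ∂₂v₂` has zero gradient, hence is a constant `b`; then
`v - b x` has zero gradient as well, so it is a constant vector `a`. -/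

namespace MvPolynomial

variable {σ R : Type*}

theorem pderiv_comm [CommRing R] (i j : σ) (p : MvPolynomial σ R) :
    pderiv i (pderiv j p) = pderiv j (pderiv i p) := by
  have hbracket :
      ⁅pderiv (R := R) i, pderiv j⁆ = (0 : Derivation R (MvPolynomial σ R) (MvPolynomial σ R)) := by
    classical
    refine derivation_ext fun k => ?_
    simp only [Derivation.commutator_apply, pderiv_X, Pi.single_apply]
    split_ifs <;> simp
  simpa [Derivation.commutator_apply, sub_eq_zero] using congr($hbracket p)

theorem pderiv_ext [CommRing R] [IsAddTorsionFree R] {p q : MvPolynomial σ R}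
    (hD : ∀ i, pderiv i p = pderiv i q) (hc : constantCoeff p = constantCoeff q) : p = q := by
  refine coe_injective σ R (MvPowerSeries.pderiv.ext (fun i => ?_) ?_)
  · rw [MvPowerSeries.pderiv_coe, MvPowerSeries.pderiv_coe, hD i]
  · simpa [← MvPowerSeries.coeff_zero_eq_constantCoeff_apply, coeff_coe, constantCoeff_eq] using hc

theorem eq_C_of_pderiv_eq_zero [CommRing R] [IsAddTorsionFree R] {p : MvPolynomial σ R}
    (hD : ∀ i, pderiv i p = 0) : p = C (constantCoeff p) :=
  pderiv_ext (by simpa using hD) (by simp)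

end MvPolynomial

theorem psymCurl_eq_zero_iff (v : Fin 2 → P2) :
    psymCurl v = 0 ↔
      pderiv 1 (v 0) = 0 ∧ pderiv 0 (v 1) = 0 ∧ pderiv 0 (v 0) = pderiv 1 (v 1) := by
  rw [← Matrix.ext_iff]
  simp [Fin.forall_fin_two, psymCurl, pcurl, add_self_eq_zero, add_neg_eq_zero, neg_add_eq_zero,
    smul_right_inj, self_eq_neg, eq_comm (a := pderiv 1 (v 1))]
  tauto

/-- `sym curl v = 0` iff `v` is in the lowest-order Raviart–Thomas space
`RT = {a + b x : a ∈ ℝ², b ∈ ℝ}`. -/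
theorem stmt_3 (v : Fin 2 → P2) :
    psymCurl v = 0 ↔
      ∃ (a₁ a₂ b : ℝ), v 0 = C a₁ + C b * X 0 ∧ v 1 = C a₂ + C b * X 1 := by
  rw [psymCurl_eq_zero_iff]
  constructor
  · rintro ⟨h₁v₀, h₀v₁, hdiag⟩
    obtain ⟨b, hb⟩ : ∃ b, pderiv 0 (v 0) = C b := by
      refine ⟨_, eq_C_of_pderiv_eq_zero (Fin.forall_fin_two.2 ⟨?_, ?_⟩)⟩
      · rw [hdiag, pderiv_comm, h₀v₁, map_zero]
      · rw [pderiv_comm, h₁v₀, map_zero]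
    refine ⟨constantCoeff (v 0), constantCoeff (v 1), b,
      pderiv_ext (Fin.forall_fin_two.2 ⟨?_, ?_⟩) ?_, pderiv_ext (Fin.forall_fin_two.2 ⟨?_, ?_⟩) ?_⟩ <;>
      simp [pderiv_X, h₁v₀, h₀v₁, ← hdiag, hb]
  · rintro ⟨a₁, a₂, b, hv₀, hv₁⟩
    simp [hv₀, hv₁, pderiv_X]
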